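/- Let δ be a Young diagram of height < r and width strictly less than d − r + 1 (with 0 < r ≤ d), and set ε_k = c_{d−r+1, r}(δ_k) for the staircase sequence δ_0, …, δ_K with K = d − r + 1. Then the height of ε_k equals r for all k < K, the height of ε_K is strictly less than r, and ε_K = c_{d−r, r−1}(δ). -/

import Mathlib

/-- Row lengths (0-indexed) of the rotated complement of a Young diagram inside a
`w × h` rectangle. -/
def ydComp (w h : ℕ) (f : ℕ → ℕ) : ℕ → ℕ :=
  fun i => if i < h then w - f (h - 1 - i) else 0

/-- `colHt f j` : height of the `j`-th column (`j ≥ 1`) of the Young diagram with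
0-indexed row lengths `f`, i.e. the number of rows of length at least `j`. -/
noncomputable def colHt (f : ℕ → ℕ) (j : ℕ) : ℕ := sInf {i | f i < j}

/-- Add boxes to column `k` so that rows `0,…,t-1` reach length at least `k`,
i.e. the `k`-th column reaches height `t`. -/
def addCol (f : ℕ → ℕ) (k t : ℕ) : ℕ → ℕ :=
  fun i => if i < t then max (f i) k else f i

/-- The staircase algorithm with parameter `r` applied to a Young diagram `f` of
height `< r`: stage 1 adds boxes to the first column until it reaches height `r`;
stage `k ≥ 2` adds boxes to the `k`-th column until its height is one more than the
height of the `(k-1)`-th column of the starting diagram. `staircase r f k` is `δ_k`. -/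
noncomputable def staircase (r : ℕ) (f : ℕ → ℕ) : ℕ → ℕ → ℕ
  | 0 => f
  | k + 1 => addCol (staircase r f k) (k + 1) (if k = 0 then r else colHt f k + 1)

/-!
Row `i` of `δ_k` has the closed form `max (δ i) k` for `i = 0` and
`max (δ i) (min (δ (i - 1) + 1) k)` for `0 < i < r`. As long as `k < d - r + 1`, every row of
`δ_k` below `r` is shorter than the rectangle, so its complement has full height `r`. At
`k = d - r + 1` the first row fills the rectangle, so the complement loses its last row, and
row `i ≥ 1` of `δ_K` is `δ (i - 1) + 1`, which is exactly the complement of `δ` in the smaller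
`(d - r) × (r - 1)` rectangle.
-/

section ColHt

variable {f : ℕ → ℕ} {k m : ℕ}

theorem lt_colHt_iff (hf : Antitone f) (h : f m < k) (i : ℕ) : i < colHt f k ↔ k ≤ f i := by
  constructor
  · intro hi
    simpa using Nat.notMem_of_lt_sInf hi
  · intro hki
    by_contra! hle
    have hmem : f (colHt f k) < k := Nat.sInf_mem (s := {i | f i < k}) ⟨m, h⟩
    have := hf hle
    omega

end ColHt

section Staircase

variable {r : ℕ} {f : ℕ → ℕ} {k i : ℕ}

theorem staircase_succ_of_ne_zero (hk : k ≠ 0) :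
    staircase r f (k + 1) = addCol (staircase r f k) (k + 1) (colHt f k + 1) := by
  simp [staircase, hk]

theorem staircase_apply_zero (hr : 0 < r) (k : ℕ) : staircase r f k 0 = max (f 0) k := by
  induction k with
  | zero => simp [staircase]
  | succ k ih =>
    rcases eq_or_ne k 0 with rfl | hk
    · simp [staircase, addCol, hr]
    · simp only [staircase_succ_of_ne_zero hk, addCol, Nat.succ_pos, if_true, ih]
      omega

theorem staircase_apply_of_pos_of_lt (hf : Antitone f) (h0 : f (r - 1) = 0)
    (hi0 : 0 < i) (hi : i < r) (k : ℕ) :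
    staircase r f k i = max (f i) (min (f (i - 1) + 1) k) := by
  induction k with
  | zero => simp [staircase]
  | succ k ih =>
    rcases eq_or_ne k 0 with rfl | hk
    · simp only [staircase, addCol, if_true, hi]
      omega
    · have hcol := lt_colHt_iff hf (show f (r - 1) < k by omega) (i - 1)
      simp only [staircase_succ_of_ne_zero hk, addCol, ih]
      split_ifs <;> omega

theorem staircase_lt (hr : 0 < r) (hf : Antitone f) (h0 : f (r - 1) = 0) {w : ℕ}
    (hw : f 0 < w) (hk : k < w) (hi : i < r) : staircase r f k i < w := by
  have hfi : f i ≤ f 0 := hf (Nat.zero_le i)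
  rcases Nat.eq_zero_or_pos i with rfl | hi0
  · rw [staircase_apply_zero hr]
    omega
  · rw [staircase_apply_of_pos_of_lt hf h0 hi0 hi]
    omega

theorem ydComp_staircase (hr : 0 < r) (hf : Antitone f) (h0 : f (r - 1) = 0) {m : ℕ}
    (hm : f 0 ≤ m) : ydComp (m + 1) r (staircase r f (m + 1)) = ydComp m (r - 1) f := by
  funext i
  simp only [ydComp]
  rcases lt_trichotomy i (r - 1) with hi | rfl | hi
  · have hle : f (r - 1 - i) ≤ f (r - 1 - 1 - i) := hf (by omega)
    have hle₀ : f (r - 1 - 1 - i) ≤ f 0 := hf (Nat.zero_le _)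
    have hsub : r - 1 - i - 1 = r - 1 - 1 - i := by omega
    rw [if_pos (by omega), if_pos hi,
      staircase_apply_of_pos_of_lt hf h0 (by omega) (by omega), hsub]
    omega
  · rw [if_pos (by omega), if_neg (lt_irrefl _), Nat.sub_self, staircase_apply_zero hr]
    omega
  · rw [if_neg (by omega), if_neg (by omega)]

end Staircase

section YdComp

variable {w h : ℕ} {g : ℕ → ℕ}

theorem sInf_ydComp_eq_zero_eq_of_lt (hg : ∀ j < h, g j < w) :
    sInf {i | ydComp w h g i = 0} = h := by
  have hh : ydComp w h g h = 0 := by simp [ydComp]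
  refine le_antisymm (Nat.sInf_le hh) (le_csInf ⟨h, hh⟩ fun b hb => ?_)
  by_contra! hbh
  have := hg (h - 1 - b) (by omega)
  replace hb : ydComp w h g b = 0 := hb
  simp only [ydComp, if_pos hbh] at hb
  omega

theorem sInf_ydComp_eq_zero_lt_of_le (hh : 0 < h) (hg : w ≤ g 0) :
    sInf {i | ydComp w h g i = 0} < h := by
  have hmem : ydComp w h g (h - 1) = 0 := by
    simp only [ydComp, if_pos (Nat.sub_lt hh Nat.one_pos), Nat.sub_self]
    omega
  exact lt_of_le_of_lt (Nat.sInf_le hmem) (Nat.sub_lt hh Nat.one_pos)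

end YdComp

theorem stmt9_general (d r : ℕ) (f : ℕ → ℕ) (hr : 0 < r)
    (hmono : ∀ i j, i ≤ j → f j ≤ f i)
    (hht : ∀ i, r - 1 ≤ i → f i = 0)
    (hwidth : f 0 < d - r + 1) :
    (∀ k, k < d - r + 1 →
        sInf {i | ydComp (d - r + 1) r (staircase r f k) i = 0} = r) ∧
      sInf {i | ydComp (d - r + 1) r (staircase r f (d - r + 1)) i = 0} < r ∧
      ydComp (d - r + 1) r (staircase r f (d - r + 1)) = ydComp (d - r) (r - 1) f := by
  have hf : Antitone f := fun i j hij => hmono i j hij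
  have h0 : f (r - 1) = 0 := hht _ le_rfl
  refine ⟨fun k hk => ?_, ?_, ydComp_staircase hr hf h0 (by omega)⟩
  · exact sInf_ydComp_eq_zero_eq_of_lt fun j hj => staircase_lt hr hf h0 hwidth hk hj
  · refine sInf_ydComp_eq_zero_lt_of_le hr ?_
    rw [staircase_apply_zero hr]
    exact le_max_right _ _

/-- For `δ` of height `< r` and width `< d - r + 1`, with `ε_k = c_{d-r+1,r}(δ_k)`
and `K = d - r + 1`: the height of `ε_k` equals `r` for `k < K`, the height of
`ε_K` is `< r`, and `ε_K = c_{d-r,r-1}(δ)`. -/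
theorem stmt9 (d r : ℕ) (f : ℕ → ℕ) (hr : 0 < r) (hrd : r ≤ d)
    (hmono : ∀ i j, i ≤ j → f j ≤ f i)
    (hht : ∀ i, r - 1 ≤ i → f i = 0)
    (hwidth : f 0 < d - r + 1) :
    (∀ k, k < d - r + 1 →
        sInf {i | ydComp (d - r + 1) r (staircase r f k) i = 0} = r) ∧
      sInf {i | ydComp (d - r + 1) r (staircase r f (d - r + 1)) i = 0} < r ∧
      ydComp (d - r + 1) r (staircase r f (d - r + 1)) = ydComp (d - r) (r - 1) f :=
  stmt9_general d r f hr hmono hht hwidth
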